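/- arXiv:2604.12045 — 2 statements merged into one kernel-verified Lean document; each statement's English description precedes it below -/
import Mathlib

section
/- Let f : ℝⁿ → ℝ be continuously differentiable and invex with minimum value f*. If f is increasing at infinity, then the set of global minimizers {x : f(x) = f*} is connected. -/
/-!
If the set `M` of minimizers split into two compact pieces, the frontier of a relatively compact
open neighbourhood of one piece that avoids the other would be a compact set disjoint from `M`
crossed by every path between the pieces; so every such path climbs to some level `m > f*`.
Since the sublevel sets are compact, the mountain pass argument then yields a critical point
above `f*`: without one, a cut-off gradient step would push a nearly optimal path strictly below
the minimax level. Invexity rules out such a critical point.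
-/

open Set Metric
open scoped Gradient

theorem isCompact_setOf_le_of_forall_notMem_lt {X : Type*} [TopologicalSpace X] {f : X → ℝ}
    (hf : Continuous f) {K : Set X} (hK : IsCompact K) {x : X} (hfK : ∀ z ∉ K, f x < f z) :
    IsCompact {y | f y ≤ f x} :=
  hK.of_isClosed_subset (isClosed_le hf continuous_const) fun y hy ↦ by
    by_contra hyK
    exact (hfK y hyK).not_ge hy

theorem exists_isCompact_barrier_of_not_isPreconnected {X : Type*} [TopologicalSpace X]
    [LocallyCompactSpace X] [T2Space X] {M : Set X} (hM : IsCompact M)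
    (hM' : ¬IsPreconnected M) :
    ∃ a ∈ M, ∃ b ∈ M, ∃ T, IsCompact T ∧ Disjoint M T ∧
      ∀ s, IsPreconnected s → a ∈ s → b ∈ s → (s ∩ T).Nonempty := by
  obtain ⟨u, v, hu, hv, hMuv, huv, hMu, hMv⟩ : ∃ u v, IsClosed u ∧ IsClosed v ∧ M ⊆ u ∪ v ∧
      Disjoint u v ∧ ¬M ⊆ u ∧ ¬M ⊆ v := by
    simpa [isPreconnected_iff_subset_of_fully_disjoint_closed hM.isClosed] using hM'
  obtain ⟨b, hbM, hbu⟩ := not_subset.mp hMu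
  obtain ⟨a, haM, hav⟩ := not_subset.mp hMv
  have hbv : b ∈ v := (hMuv hbM).resolve_left hbu
  have hau : a ∈ u := (hMuv haM).resolve_right hav
  obtain ⟨W, hW, huW, hWv, hWc⟩ := exists_open_between_and_isCompact_closure
    (hM.inter_right hu) hv.isOpen_compl fun x hx ↦ huv.notMem_of_mem_left hx.2
  refine ⟨a, haM, b, hbM, frontier W, hWc.of_isClosed_subset isClosed_frontier
    frontier_subset_closure, ?_, fun s hs has hbs ↦ ?_⟩
  · refine disjoint_left.mpr fun x hxM hxW ↦ ?_
    have hxu : x ∈ u := (hMuv hxM).resolve_right (hWv (frontier_subset_closure hxW))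
    exact disjoint_left.mp (disjoint_iff_inter_eq_empty.mpr hW.inter_frontier_eq)
      (huW ⟨hxM, hxu⟩) hxW
  · by_contra hsT
    have hsplit : s ⊆ W ∪ (closure W)ᶜ := fun x hxs ↦ by
      by_contra hx
      simp only [mem_union, mem_compl_iff, not_or, not_not] at hx
      exact hsT ⟨x, hxs, hW.frontier_eq ▸ ⟨hx.2, hx.1⟩⟩
    rcases hs.subset_or_subset hW isClosed_closure.isOpen_compl
        (disjoint_compl_right.mono_right (compl_subset_compl.mpr subset_closure)) hsplit with h | h
    · exact hWv (subset_closure (h hbs)) hbv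
    · exact h has (subset_closure (huW ⟨haM, hau⟩))

theorem Path.exists_forall_le_apply {X : Type*} [TopologicalSpace X] {a b : X} (γ : Path a b)
    {g : X → ℝ} (hg : Continuous g) : ∃ t, ∀ t', g (γ t') ≤ g (γ t) := by
  obtain ⟨t, -, ht⟩ :=
    isCompact_univ.exists_isMaxOn univ_nonempty (hg.comp γ.continuous).continuousOn
  exact ⟨t, fun t' ↦ ht (mem_univ t')⟩

section Gradient

variable {E : Type*} [NormedAddCommGroup E] [InnerProductSpace ℝ E] [CompleteSpace E]
  {f : E → ℝ}

theorem norm_gradient (f : E → ℝ) (x : E) : ‖∇ f x‖ = ‖fderiv ℝ f x‖ :=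
  LinearIsometryEquiv.norm_map _ _

theorem fderiv_apply_gradient (f : E → ℝ) (x : E) : fderiv ℝ f x (∇ f x) = ‖∇ f x‖ ^ 2 := by
  rw [← real_inner_self_eq_norm_sq, gradient, InnerProductSpace.toDual_symm_apply]

theorem ContDiff.continuous_gradient (hf : ContDiff ℝ 1 f) : Continuous (∇ f) :=
  (InnerProductSpace.toDual ℝ E).symm.continuous.comp (hf.continuous_fderiv one_ne_zero)

theorem apply_sub_smul_gradient_le (hf : Differentiable ℝ f) {y : E} {r C τ : ℝ}
    (hC : ∀ w ∈ ball y r, ‖fderiv ℝ f w - fderiv ℝ f y‖ ≤ C) (hτ : 0 ≤ τ)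
    (hτr : τ * ‖∇ f y‖ < r) :
    f (y - τ • ∇ f y) ≤ f y - τ * ‖∇ f y‖ ^ 2 + C * (τ * ‖∇ f y‖) := by
  have hstep : y - τ • ∇ f y - y = (-τ) • ∇ f y := by module
  have hnorm : ‖y - τ • ∇ f y - y‖ = τ * ‖∇ f y‖ := by
    rw [hstep, norm_smul, norm_neg, Real.norm_of_nonneg hτ]
  have hmem : y - τ • ∇ f y ∈ ball y r := by rwa [mem_ball, dist_eq_norm, hnorm]
  have hmvt := (convex_ball y r).norm_image_sub_le_of_norm_fderiv_le' (fun w _ ↦ hf w) hC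
    (mem_ball_self ((mul_nonneg hτ (norm_nonneg _)).trans_lt hτr)) hmem
  rw [hnorm, hstep, map_smul, fderiv_apply_gradient, smul_eq_mul] at hmvt
  linarith [(Real.le_norm_self _).trans hmvt]

theorem IsCompact.exists_forall_apply_sub_smul_gradient_le (hf : ContDiff ℝ 1 f) {K : Set E}
    (hK : IsCompact K) (hcrit : ∀ x ∈ K, fderiv ℝ f x ≠ 0) :
    ∃ s > 0, ∃ κ > 0, ∀ y ∈ K, ∀ τ ∈ Icc 0 s, f (y - τ • ∇ f y) ≤ f y - τ * κ := by
  obtain ⟨ε, hε, hεK⟩ :=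
    hK.exists_forall_le' (continuous_norm.comp hf.continuous_gradient).continuousOn
      fun x hx ↦ (norm_gradient f x).symm ▸ norm_pos_iff.mpr (hcrit x hx)
  obtain ⟨G, hG⟩ := hK.exists_bound_of_continuousOn hf.continuous_gradient.continuousOn
  obtain ⟨η, hη, hηK⟩ := Metric.mem_uniformity_dist.mp
    (hK.uniformContinuousAt_of_continuousAt (fderiv ℝ f)
      (fun x _ ↦ (hf.continuous_fderiv one_ne_zero).continuousAt)
      (Metric.dist_mem_uniformity (half_pos hε)))
  refine ⟨η / (|G| + 1), by positivity, ε ^ 2 / 2, by positivity, fun y hy τ hτ ↦ ?_⟩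
  have hgε : ε ≤ ‖∇ f y‖ := hεK y hy
  have hτg : τ * ‖∇ f y‖ < η := calc
    τ * ‖∇ f y‖ ≤ η / (|G| + 1) * |G| :=
      mul_le_mul hτ.2 ((hG y hy).trans (le_abs_self G)) (norm_nonneg _) (by positivity)
    _ < η := by
      rw [div_mul_eq_mul_div, div_lt_iff₀ (by positivity)]
      linarith
  have hosc : ∀ w ∈ ball y η, ‖fderiv ℝ f w - fderiv ℝ f y‖ ≤ ε / 2 := fun w hw ↦ by
    rw [← dist_eq_norm, dist_comm]
    exact (hηK (mem_ball'.mp hw) hy).le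
  have := apply_sub_smul_gradient_le (hf.differentiable one_ne_zero) hosc hτ.1 hτg
  nlinarith [mul_nonneg hτ.1 (mul_nonneg (sub_nonneg.mpr hgε) (by linarith : 0 ≤ ‖∇ f y‖ + ε / 2))]

theorem exists_deformation (hf : ContDiff ℝ 1 f) {c δ₀ : ℝ} (hδ₀ : 0 < δ₀)
    (hband : IsCompact {x | c - δ₀ ≤ f x ∧ f x ≤ c + δ₀})
    (hcrit : ∀ x, c - δ₀ ≤ f x → f x ≤ c + δ₀ → fderiv ℝ f x ≠ 0) :
    ∃ δ ∈ Ioc 0 δ₀, ∃ η : E → E, Continuous η ∧ (∀ x, f x ≤ c - δ → η x = x) ∧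
      ∀ x, f x ≤ c + δ / 2 → f (η x) ≤ c - δ / 2 := by
  obtain ⟨s, hs, κ, hκ, hdesc⟩ :=
    hband.exists_forall_apply_sub_smul_gradient_le hf fun x hx ↦ hcrit x hx.1 hx.2
  set δ := min δ₀ (s * κ)
  have hδ : 0 < δ := lt_min hδ₀ (by positivity)
  -- the step length `τ x` ramps from `0` at level `c - δ` up to `s` at level `c - δ / 2`
  set τ : E → ℝ := fun x ↦ s * min 1 (max 0 (2 * (f x - (c - δ)) / δ))
  have hτ : ∀ x, τ x ∈ Icc 0 s := fun x ↦
    ⟨by positivity, mul_le_of_le_one_right hs.le (min_le_left _ _)⟩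
  have hτ_low : ∀ x, f x ≤ c - δ → τ x = 0 := fun x hx ↦ by
    have h0 : 2 * (f x - (c - δ)) / δ ≤ 0 := div_nonpos_of_nonpos_of_nonneg (by linarith) hδ.le
    simp only [τ, max_eq_left h0, min_eq_right zero_le_one, mul_zero]
  have hτ_high : ∀ x, c - δ / 2 ≤ f x → τ x = s := fun x hx ↦ by
    have h1 : 1 ≤ 2 * (f x - (c - δ)) / δ := by
      rw [le_div_iff₀ hδ]
      linarith
    simp only [τ, max_eq_right (zero_le_one.trans h1), min_eq_left h1, mul_one]
  refine ⟨δ, ⟨hδ, min_le_left _ _⟩, fun x ↦ x - τ x • ∇ f x, ?_, fun x hx ↦ ?_, fun x hx ↦ ?_⟩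
  · have hτc : Continuous τ := by
      have := hf.continuous
      fun_prop
    exact continuous_id.sub (hτc.smul hf.continuous_gradient)
  · simp [hτ_low x hx]
  · show f (x - τ x • ∇ f x) ≤ c - δ / 2
    by_cases hlow : f x ≤ c - δ
    · simp only [hτ_low x hlow, zero_smul, sub_zero]
      linarith
    have hδδ₀ : δ ≤ δ₀ := min_le_left _ _
    have hfx := hdesc x ⟨by linarith, by linarith⟩ (τ x) (hτ x)
    by_cases hmid : f x ≤ c - δ / 2
    · nlinarith [(hτ x).1]
    · have hδs : δ ≤ s * κ := min_le_right _ _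
      rw [hτ_high x (not_le.mp hmid).le] at hfx ⊢
      linarith

theorem exists_fderiv_eq_zero_of_forall_path_exists_le (hf : ContDiff ℝ 1 f)
    (hsub : ∀ x, IsCompact {y | f y ≤ f x}) {a b : E} {m : ℝ} (hm : max (f a) (f b) < m)
    (hbarrier : ∀ γ : Path a b, ∃ t, m ≤ f (γ t)) :
    ∃ x, max (f a) (f b) < f x ∧ fderiv ℝ f x = 0 := by
  set S := {r | ∃ γ : Path a b, ∀ t, f (γ t) ≤ r}
  set c := sInf S
  have γ₀ : Path a b := (PathConnectedSpace.joined a b).somePath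
  have hSne : S.Nonempty :=
    let ⟨_, ht⟩ := γ₀.exists_forall_le_apply hf.continuous
    ⟨_, γ₀, ht⟩
  have hSm : m ∈ lowerBounds S := fun _ ⟨γ, hγ⟩ ↦
    let ⟨t, ht⟩ := hbarrier γ
    ht.trans (hγ t)
  by_contra! hcrit
  by_cases hz : ∃ z, c < f z
  · obtain ⟨z, hz⟩ := hz
    have hmc : m ≤ c := le_csInf hSne hSm
    set δ₀ := min (f z - c) ((c - max (f a) (f b)) / 2)
    have hδ₀ : 0 < δ₀ := lt_min (by linarith) (by linarith)
    have hδ₀z : δ₀ ≤ f z - c := min_le_left _ _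
    have hδ₀ab : δ₀ ≤ (c - max (f a) (f b)) / 2 := min_le_right _ _
    have hband : IsCompact {x | c - δ₀ ≤ f x ∧ f x ≤ c + δ₀} :=
      (hsub z).of_isClosed_subset
        ((isClosed_le continuous_const hf.continuous).inter
          (isClosed_le hf.continuous continuous_const))
        fun x hx ↦ show f x ≤ f z by linarith [hx.2]
    obtain ⟨δ, ⟨hδ, hδδ₀⟩, η, hη, hη_fix, hη_desc⟩ :=
      exists_deformation hf hδ₀ hband fun x hx _ ↦ hcrit x (by linarith)
    obtain ⟨r, ⟨γ, hγ⟩, hr⟩ := exists_lt_of_csInf_lt hSne (lt_add_of_pos_right c (half_pos hδ))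
    have hfix : ∀ x, f x ≤ max (f a) (f b) → η x = x := fun x hx ↦ hη_fix x (by linarith)
    have hγ' : c - δ / 2 ∈ S := ⟨(γ.map hη).cast (hfix a (le_max_left _ _)).symm
      (hfix b (le_max_right _ _)).symm, fun t ↦ hη_desc _ ((hγ t).trans hr.le)⟩
    linarith [csInf_le ⟨m, hSm⟩ hγ']
  · -- `f` never exceeds the minimax level `c`, so the top of any path is a global maximum
    simp only [not_exists, not_lt] at hz
    obtain ⟨t, ht⟩ := γ₀.exists_forall_le_apply hf.continuous
    have hct : c ≤ f (γ₀ t) := csInf_le ⟨m, hSm⟩ ⟨γ₀, ht⟩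
    have hglobal : IsMaxOn f univ (γ₀ t) := fun y _ ↦ (hz y).trans hct
    exact hcrit (γ₀ t) (hm.trans_le ((le_csInf hSne hSm).trans hct))
      (hglobal.isLocalMax Filter.univ_mem).fderiv_eq_zero

end Gradient

/-- The set of global minimizers of a C¹ invex function increasing at infinity is connected. -/
theorem minima_connected_of_invex {n : ℕ}
    (f : EuclideanSpace ℝ (Fin n) → ℝ) (fstar : ℝ)
    (hf : ContDiff ℝ 1 f)
    (hmin : ∀ x, fstar ≤ f x) (hattained : ∃ x, f x = fstar)
    (hinvex : ∀ x, fderiv ℝ f x = 0 → ∀ y, f x ≤ f y)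
    (hinc : ∀ x, ∃ K : Set (EuclideanSpace ℝ (Fin n)),
      IsCompact K ∧ ∀ z ∉ K, f x < f z) :
    IsConnected {x | f x = fstar} := by
  obtain ⟨x₀, hx₀⟩ := hattained
  have hsub : ∀ x, IsCompact {y | f y ≤ f x} := fun x ↦
    let ⟨_, hK, hfK⟩ := hinc x
    isCompact_setOf_le_of_forall_notMem_lt hf.continuous hK hfK
  have hM : IsCompact {x | f x = fstar} := (hsub x₀).of_isClosed_subset
    (isClosed_eq hf.continuous continuous_const) fun x hx ↦ (hx.trans hx₀.symm).le
  refine ⟨⟨x₀, hx₀⟩, by_contra fun hM' ↦ ?_⟩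
  obtain ⟨a, ha, b, hb, T, hT, hMT, hcross⟩ :=
    exists_isCompact_barrier_of_not_isPreconnected hM hM'
  have hab : max (f a) (f b) = fstar := by rw [mem_ofPred_eq.mp ha, mem_ofPred_eq.mp hb, max_self]
  obtain ⟨m, hm, hmT⟩ := hT.exists_forall_le' hf.continuous.continuousOn fun x hx ↦
    (hmin x).lt_of_ne fun h ↦ disjoint_left.mp hMT h.symm hx
  obtain ⟨x, hx, hcrit⟩ := exists_fderiv_eq_zero_of_forall_path_exists_le hf hsub (m := m)
    (hab ▸ hm) fun γ ↦
      let ⟨_, ⟨t, rfl⟩, htT⟩ := hcross _ (isConnected_range γ.continuous).isPreconnected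
        ⟨0, γ.source⟩ ⟨1, γ.target⟩
      ⟨t, hmT _ htT⟩
  linarith [hinvex x hcrit x₀]
end

section
/- Let f : ℝ^{n_x} × ℝ^{n_y} → ℝ be continuously differentiable, invex in x for each fixed y, incave in y for each fixed x, with f(·, y) increasing at infinity and f(x, ·) decreasing at infinity. Assume the set E of saddle points is non-empty. Then the union of the set of minimax points and the set of maximin points, M̲ ∪ M̄, is connected. -/
open Set Filter InnerProductSpace
open scoped Gradient

/-!
For fixed `y`, the minimizers of the invex, coercive function `f · y` form a connected set. Join
two minimizers by a segment and apply finitely many gradient steps `x ↦ x - h ∇g x`: these fix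
the critical points, which are exactly the minimizers, and push the segment into any prescribed
neighbourhood of the compact set of minimizers. A compact set any two points of which can be
joined by a preconnected set inside every neighbourhood of it is preconnected. The same holds
for the maximizers of `f x ·`.

Given a saddle point `s`, a minimax point `p` is joined to `s` by the connected sets
`{p.1} × argmax f(p.1, ·)` of minimax points and `argmin f(·, s.2) × {s.2}` of maximin points,
which meet at the saddle point `(p.1, s.2)`; maximin points are handled symmetrically.
-/

def minSet {α : Type*} (g : α → ℝ) : Set α := {x | ∀ z, g x ≤ g z}

def maxSet {α : Type*} (g : α → ℝ) : Set α := {x | ∀ z, g z ≤ g x}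

theorem IsCompact.isPreconnected_of_forall_pair_of_isOpen {X : Type*} [TopologicalSpace X]
    [T2Space X] {A : Set X} (hA : IsCompact A)
    (H : ∀ U, IsOpen U → A ⊆ U → ∀ x ∈ A, ∀ y ∈ A, ∃ t ⊆ U, x ∈ t ∧ y ∈ t ∧ IsPreconnected t) :
    IsPreconnected A := by
  rw [isPreconnected_iff_subset_of_fully_disjoint_closed hA.isClosed]
  intro u v hu hv hAuv huv
  by_contra! hne
  obtain ⟨⟨a, haA, hau⟩, ⟨b, hbA, hbv⟩⟩ := And.imp not_subset.1 not_subset.1 hne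
  obtain ⟨U, V, hU, hV, hAU, hAV, hUV⟩ := SeparatedNhds.of_isCompact_isCompact
    (hA.inter_right hu) (hA.inter_right hv) (huv.mono inter_subset_right inter_subset_right)
  have hAUV : A ⊆ U ∪ V := fun z hz =>
    (hAuv hz).imp (fun hzu => hAU ⟨hz, hzu⟩) fun hzv => hAV ⟨hz, hzv⟩
  obtain ⟨t, htUV, hbt, hat, ht⟩ := H (U ∪ V) (hU.union hV) hAUV b hbA a haA
  obtain ⟨z, -, hzU, hzV⟩ := ht U V hU hV htUV
    ⟨b, hbt, hAU ⟨hbA, (hAuv hbA).resolve_right hbv⟩⟩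
    ⟨a, hat, hAV ⟨haA, (hAuv haA).resolve_left hau⟩⟩
  exact hUV.notMem_of_mem_left hzU hzV

section Saddle

variable {X Y : Type*} (f : X → Y → ℝ)

def IsMinimaxPoint (p : X × Y) : Prop :=
  p.2 ∈ maxSet (f p.1) ∧ ∀ a, f p.1 p.2 ≤ ⨆ y, f a y

def IsMaximinPoint (p : X × Y) : Prop :=
  p.1 ∈ minSet (f · p.2) ∧ ∀ b, ⨅ x, f x b ≤ f p.1 p.2

def IsSaddlePoint (p : X × Y) : Prop :=
  p.2 ∈ maxSet (f p.1) ∧ p.1 ∈ minSet (f · p.2)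

variable {f} {p s : X × Y}

theorem IsSaddlePoint.isMinimaxPoint (hs : IsSaddlePoint f s)
    (hbdd : ∀ a, BddAbove (range (f a))) : IsMinimaxPoint f s :=
  ⟨hs.1, fun a => (hs.2 a).trans (le_ciSup (hbdd a) s.2)⟩

theorem IsSaddlePoint.isMaximinPoint (hs : IsSaddlePoint f s)
    (hbdd : ∀ b, BddBelow (range (f · b))) : IsMaximinPoint f s :=
  ⟨hs.2, fun b => (ciInf_le (hbdd b) s.1).trans (hs.1 b)⟩

theorem IsMinimaxPoint.of_mem_maxSet {y : Y} (hp : IsMinimaxPoint f p) (hy : y ∈ maxSet (f p.1)) :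
    IsMinimaxPoint f (p.1, y) :=
  ⟨hy, fun a => (hp.1 y).trans (hp.2 a)⟩

theorem IsMaximinPoint.of_mem_minSet {x : X} (hp : IsMaximinPoint f p) (hx : x ∈ minSet (f · p.2)) :
    IsMaximinPoint f (x, p.2) :=
  ⟨hx, fun b => (hp.2 b).trans (hp.1 x)⟩

theorem IsSaddlePoint.mk_of_isMinimaxPoint (hs : IsSaddlePoint f s) (hp : IsMinimaxPoint f p) :
    IsSaddlePoint f (p.1, s.2) := by
  have : Nonempty Y := ⟨s.2⟩
  have hle : f p.1 p.2 ≤ f s.1 s.2 := (hp.2 s.1).trans (ciSup_le hs.1)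
  exact ⟨fun z => (hp.1 z).trans (hle.trans (hs.2 p.1)),
    fun z => (hp.1 s.2).trans (hle.trans (hs.2 z))⟩

theorem IsSaddlePoint.mk_of_isMaximinPoint (hs : IsSaddlePoint f s) (hp : IsMaximinPoint f p) :
    IsSaddlePoint f (s.1, p.2) := by
  have : Nonempty X := ⟨s.1⟩
  have hge : f s.1 s.2 ≤ f p.1 p.2 := (le_ciInf hs.2).trans (hp.2 s.2)
  exact ⟨fun z => (hs.1 z).trans (hge.trans (hp.1 s.1)),
    fun z => (hs.1 p.2).trans (hge.trans (hp.1 z))⟩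

variable [TopologicalSpace X] [TopologicalSpace Y]

theorem isConnected_setOf_isMinimaxPoint_union_isMaximinPoint
    (hX : ∀ y, IsConnected (minSet (f · y))) (hY : ∀ x, IsConnected (maxSet (f x)))
    (hs : IsSaddlePoint f s) :
    IsConnected ({p | IsMinimaxPoint f p} ∪ {p | IsMaximinPoint f p}) := by
  have hbddA (a : X) : BddAbove (range (f a)) := by
    obtain ⟨y, hy⟩ := (hY a).nonempty
    exact ⟨f a y, forall_mem_range.2 hy⟩
  have hbddB (b : Y) : BddBelow (range (f · b)) := by
    obtain ⟨x, hx⟩ := (hX b).nonempty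
    exact ⟨f x b, forall_mem_range.2 hx⟩
  have hYpre (x : X) : IsPreconnected ({x} ×ˢ maxSet (f x)) :=
    isPreconnected_singleton.prod (hY x).isPreconnected
  have hXpre (y : Y) : IsPreconnected (minSet (f · y) ×ˢ {y}) :=
    (hX y).isPreconnected.prod isPreconnected_singleton
  refine ⟨⟨s, Or.inl (hs.isMinimaxPoint hbddA)⟩, isPreconnected_of_forall s ?_⟩
  rintro p (hp | hp)
  · have hps := hs.mk_of_isMinimaxPoint hp
    refine ⟨{p.1} ×ˢ maxSet (f p.1) ∪ minSet (f · s.2) ×ˢ {s.2}, ?_, Or.inr ⟨hs.2, rfl⟩,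
      Or.inl ⟨rfl, hp.1⟩, (hYpre p.1).union (p.1, s.2) ⟨rfl, hps.1⟩ ⟨hps.2, rfl⟩ (hXpre s.2)⟩
    rintro ⟨x, y⟩ (⟨rfl : x = p.1, hy⟩ | ⟨hx, rfl : y = s.2⟩)
    · exact Or.inl (hp.of_mem_maxSet hy)
    · exact Or.inr ((hs.isMaximinPoint hbddB).of_mem_minSet hx)
  · have hps := hs.mk_of_isMaximinPoint hp
    refine ⟨minSet (f · p.2) ×ˢ {p.2} ∪ {s.1} ×ˢ maxSet (f s.1), ?_, Or.inr ⟨rfl, hs.1⟩,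
      Or.inl ⟨hp.1, rfl⟩, (hXpre p.2).union (s.1, p.2) ⟨hps.2, rfl⟩ ⟨rfl, hps.1⟩ (hYpre s.1)⟩
    rintro ⟨x, y⟩ (⟨hx, rfl : y = p.2⟩ | ⟨rfl : x = s.1, hy⟩)
    · exact Or.inr (hp.of_mem_minSet hx)
    · exact Or.inl ((hs.isMinimaxPoint hbddA).of_mem_maxSet hy)

end Saddle

theorem apply_iterate_le_max_sub_mul {α : Type*} {g : α → ℝ} {Ψ : α → α} {c d Δ : ℝ}
    (hcd : c ≤ d) (hΔ : 0 ≤ Δ) (hΨ : ∀ x, g x ≤ d → g (Ψ x) ≤ max (g x - Δ) c)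
    {x : α} (hx : g x ≤ d) (k : ℕ) : g (Ψ^[k] x) ≤ max (g x - k * Δ) c := by
  induction k with
  | zero => simp
  | succ k ih =>
    rw [Function.iterate_succ_apply']
    have hk : g (Ψ^[k] x) ≤ d := ih.trans (max_le (by nlinarith [k.cast_nonneg (α := ℝ)]) hcd)
    calc g (Ψ (Ψ^[k] x)) ≤ max (g (Ψ^[k] x) - Δ) c := hΨ _ hk
      _ ≤ max (max (g x - k * Δ) c - Δ) c := by gcongr
      _ ≤ max (g x - (k + 1 : ℕ) * Δ) c := by
        push_cast
        exact max_le (by rw [← max_sub_sub_right]; exact max_le_max (by linarith) (by linarith))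
          (le_max_right _ _)

section Gradient

variable {F : Type*} [NormedAddCommGroup F] [InnerProductSpace ℝ F] [CompleteSpace F]
  {g : F → ℝ}

theorem gradient_eq_zero_iff {x : F} : ∇ g x = 0 ↔ fderiv ℝ g x = 0 :=
  (toDual ℝ F).symm.map_eq_zero_iff

theorem ContDiff.continuous_gradient_s11 (hg : ContDiff ℝ 1 g) : Continuous (∇ g) :=
  (toDual ℝ F).symm.continuous.comp (hg.continuous_fderiv one_ne_zero)

theorem apply_sub_smul_gradient_le_s11 (hg : Differentiable ℝ g) (x : F) {h η : ℝ} (hh : 0 ≤ h)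
    (hη : ∀ ξ ∈ segment ℝ x (x - h • ∇ g x), ‖∇ g ξ - ∇ g x‖ ≤ η) :
    g (x - h • ∇ g x) ≤ g x - h * (‖∇ g x‖ * (‖∇ g x‖ - η)) := by
  obtain ⟨ξ, hξ, hmvt⟩ := domain_mvt (fun y _ => (hg y).hasFDerivAt.hasFDerivWithinAt)
    convex_univ (mem_univ x) (mem_univ (x - h • ∇ g x))
  have hinner : ‖∇ g x‖ * (‖∇ g x‖ - η) ≤ inner ℝ (∇ g ξ) (∇ g x) := by
    have hcs := real_inner_le_norm (∇ g x - ∇ g ξ) (∇ g x)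
    rw [inner_sub_left, real_inner_self_eq_norm_sq, norm_sub_rev] at hcs
    nlinarith [hη ξ hξ, norm_nonneg (∇ g x)]
  rw [sub_sub_cancel_left, ← inner_gradient_left, inner_neg_right, real_inner_smul_right] at hmvt
  nlinarith

theorem exists_gradient_step_le_max (hg : ContDiff ℝ 1 g) {c c' d : ℝ} (hcc' : c < c')
    (hW : IsCompact {x | g x ≤ d}) (hcrit : ∀ x, c ≤ g x → g x ≤ d → fderiv ℝ g x ≠ 0) :
    ∃ h > (0 : ℝ), ∃ Δ > (0 : ℝ), ∀ x, g x ≤ d → g (x - h • ∇ g x) ≤ max (g x - Δ) c' := by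
  have hgrad := hg.continuous_gradient_s11
  have hZ : IsCompact {x | c ≤ g x ∧ g x ≤ d} :=
    hW.of_isClosed_subset (isClosed_le continuous_const hg.continuous |>.inter
      (isClosed_le hg.continuous continuous_const)) fun x hx => hx.2
  obtain ⟨δ₀, hδ₀, hZδ₀⟩ := hZ.exists_forall_le' hgrad.norm.continuousOn (a := 0)
    fun x hx => norm_pos_iff.2 (gradient_eq_zero_iff.not.2 (hcrit x hx.1 hx.2))
  set η := δ₀ / 2 with hη
  obtain ⟨M, hM⟩ := hW.exists_bound_of_continuousOn hgrad.continuousOn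
  obtain ⟨δ, hδ, hδη⟩ := Metric.mem_uniformity_dist.1 <|
    hW.uniformContinuousAt_of_continuousAt _ (fun x _ => hgrad.continuousAt)
      (Metric.dist_mem_uniformity (half_pos hδ₀))
  obtain ⟨h₁, hh₁, hMh₁⟩ := exists_pos_mul_lt hδ M
  obtain ⟨h₂, hh₂, hηh₂⟩ := exists_pos_mul_lt (sub_pos.2 hcc') (η ^ 2)
  set h := min h₁ h₂
  have hh : 0 < h := lt_min hh₁ hh₂
  refine ⟨h, hh, h * η ^ 2, by positivity, fun x hx => ?_⟩
  have hstep : ∀ ξ ∈ segment ℝ x (x - h • ∇ g x), ‖∇ g ξ - ∇ g x‖ ≤ η := by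
    intro ξ hξ
    have hlen : dist x ξ < δ := calc
      dist x ξ ≤ dist x (x - h • ∇ g x) :=
        Metric.mem_closedBall'.1 (segment_subset_closedBall_left _ _ hξ)
      _ = h * ‖∇ g x‖ := by rw [dist_self_sub_right, norm_smul, Real.norm_of_nonneg hh.le]
      _ ≤ h₁ * M := mul_le_mul (min_le_left _ _) (hM x hx) (norm_nonneg _) hh₁.le
      _ < δ := by linarith
    rw [← dist_eq_norm, dist_comm]
    exact (hδη hlen hx).le
  have hdesc := apply_sub_smul_gradient_le_s11 (hg.differentiable one_ne_zero) x hh.le hstep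
  have hhη : h * η ^ 2 < c' - c :=
    lt_of_le_of_lt (mul_le_mul_of_nonneg_right (min_le_right _ _) (sq_nonneg η)) (by linarith)
  -- Above level `c` the gradient has norm at least `2η`, so a step lowers `g` by `hη²`; below `c`
  -- a step raises `g` by at most `hη²/4`, because `t (t - η) ≥ -η²/4`.
  rcases le_or_gt c (g x) with hcx | hcx
  · have hlarge : 2 * η ≤ ‖∇ g x‖ := by linarith [hZδ₀ x ⟨hcx, hx⟩]
    have hprod : 0 ≤ (‖∇ g x‖ - 2 * η) * (‖∇ g x‖ + η) :=
      mul_nonneg (by linarith) (by linarith [norm_nonneg (∇ g x)])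
    exact le_max_of_le_left (by nlinarith)
  · exact le_max_of_le_right (by nlinarith [sq_nonneg (‖∇ g x‖ - η / 2)])

theorem exists_continuous_mapsTo_sublevel (hg : ContDiff ℝ 1 g) {c d e : ℝ} (hce : c < e)
    (hW : IsCompact {x | g x ≤ d}) (hcrit : ∀ x, c ≤ g x → g x ≤ d → fderiv ℝ g x ≠ 0) :
    ∃ Φ : F → F, Continuous Φ ∧ (∀ x, fderiv ℝ g x = 0 → Φ x = x) ∧
      MapsTo Φ {x | g x ≤ d} {x | g x ≤ d ∧ g x < e} := by
  rcases lt_or_ge d e with hde | hed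
  · exact ⟨id, continuous_id, fun _ _ => rfl, fun x hx => ⟨hx, lt_of_le_of_lt hx hde⟩⟩
  obtain ⟨h, -, Δ, hΔ, hstep⟩ :=
    exists_gradient_step_le_max hg (c' := (c + e) / 2) (by linarith) hW hcrit
  obtain ⟨N, hN⟩ := exists_nat_gt ((d - e) / Δ)
  rw [div_lt_iff₀ hΔ] at hN
  refine ⟨(fun x => x - h • ∇ g x)^[N],
    (continuous_id.sub (hg.continuous_gradient_s11.const_smul h)).iterate N,
    fun x hx => Function.iterate_fixed (by simp [gradient_eq_zero_iff.2 hx]) N, fun x hx => ?_⟩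
  have hx' : g x ≤ d := hx
  have := apply_iterate_le_max_sub_mul (by linarith) hΔ.le hstep hx' N
  exact ⟨this.trans (max_le (by nlinarith [N.cast_nonneg (α := ℝ)]) (by linarith)),
    this.trans_lt (max_lt (by linarith) (by linarith))⟩

end Gradient

theorem fderiv_eq_zero_of_mem_minSet {E : Type*} [NormedAddCommGroup E] [NormedSpace ℝ E]
    {g : E → ℝ} {x : E} (hx : x ∈ minSet g) : fderiv ℝ g x = 0 :=
  IsLocalMin.fderiv_eq_zero (Eventually.of_forall hx)

section Minimizers

variable {F : Type*} [NormedAddCommGroup F] [InnerProductSpace ℝ F] [CompleteSpace F]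
  {g : F → ℝ}

theorem exists_isPreconnected_subset_of_minSet_subset (hg : ContDiff ℝ 1 g)
    (hinv : ∀ x, fderiv ℝ g x = 0 → x ∈ minSet g) (hsub : ∀ x, IsCompact {z | g z ≤ g x})
    {U : Set F} (hU : IsOpen U) (hAU : minSet g ⊆ U) {a b : F} (ha : a ∈ minSet g)
    (hb : b ∈ minSet g) : ∃ t ⊆ U, a ∈ t ∧ b ∈ t ∧ IsPreconnected t := by
  have hS : IsCompact (segment ℝ a b) := by
    rw [segment_eq_image']
    exact isCompact_Icc.image (by fun_prop)
  obtain ⟨m, -, hm⟩ := hS.exists_isMaxOn ⟨a, left_mem_segment ℝ a b⟩ hg.continuous.continuousOn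
  obtain ⟨e, hae, he⟩ := ((hsub m).diff hU).exists_forall_le' hg.continuous.continuousOn
    (a := g a) fun x hx => by
      obtain ⟨z, hz⟩ : ∃ z, g z < g x := by simpa [minSet] using fun h => hx.2 (hAU h)
      exact (ha z).trans_lt hz
  obtain ⟨Φ, hΦ, hfix, hmaps⟩ := exists_continuous_mapsTo_sublevel hg
    (c := (g a + e) / 2) (e := e) (by linarith) (hsub m)
    fun x (hx : (g a + e) / 2 ≤ g x) _ hcrit => by linarith [hinv x hcrit a]
  refine ⟨Φ '' segment ℝ a b, ?_,
    ⟨a, left_mem_segment ℝ a b, hfix a (fderiv_eq_zero_of_mem_minSet ha)⟩,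
    ⟨b, right_mem_segment ℝ a b, hfix b (fderiv_eq_zero_of_mem_minSet hb)⟩,
    (convex_segment a b).isPreconnected.image Φ hΦ.continuousOn⟩
  rintro _ ⟨x, hx, rfl⟩
  obtain ⟨hd, hlt⟩ := hmaps (hm hx)
  by_contra hxU
  exact (he _ ⟨hd, hxU⟩).not_gt hlt

theorem isConnected_minSet (hg : ContDiff ℝ 1 g) (hinv : ∀ x, fderiv ℝ g x = 0 → x ∈ minSet g)
    (hinc : ∀ x, ∃ K : Set F, IsCompact K ∧ ∀ z ∉ K, g x < g z) : IsConnected (minSet g) := by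
  have hsub (x : F) : IsCompact {z | g z ≤ g x} := by
    obtain ⟨K, hK, hlt⟩ := hinc x
    exact hK.of_isClosed_subset (isClosed_le hg.continuous continuous_const)
      fun z hz => by_contra fun hzK => (hlt z hzK).not_ge hz
  obtain ⟨a, ha⟩ : (minSet g).Nonempty := hg.continuous.exists_forall_le' 0 <|
    mem_of_superset (hsub 0).compl_mem_cocompact fun z (hz : ¬g z ≤ g 0) => (not_le.1 hz).le
  have hA : minSet g = {z | g z ≤ g a} :=
    ext fun x => ⟨fun hx => hx a, fun hx z => hx.trans (ha z)⟩
  refine ⟨⟨a, ha⟩, (hA ▸ hsub a : IsCompact (minSet g)).isPreconnected_of_forall_pair_of_isOpen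
    fun U hU hAU x hx y hy => ?_⟩
  exact exists_isPreconnected_subset_of_minSet_subset hg hinv hsub hU hAU hx hy

theorem isConnected_maxSet (hg : ContDiff ℝ 1 g) (hinc : ∀ x, fderiv ℝ g x = 0 → x ∈ maxSet g)
    (hdec : ∀ x, ∃ K : Set F, IsCompact K ∧ ∀ z ∉ K, g z < g x) : IsConnected (maxSet g) := by
  have h := isConnected_minSet (g := -g) hg.neg
    (fun x hx z => neg_le_neg (hinc x (by simpa [fderiv_neg] using hx) z))
    fun x => (hdec x).imp fun K hK => ⟨hK.1, fun z hz => neg_lt_neg (hK.2 z hz)⟩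
  convert h using 1
  ext x
  simp [minSet, maxSet]

end Minimizers

/-- Connectedness of the union of the sets of minimax and maximin points of an
invex-incave minimax problem with non-empty saddle point set. -/
theorem minimax_union_maximin_connected {nx ny : ℕ}
    (f : EuclideanSpace ℝ (Fin nx) → EuclideanSpace ℝ (Fin ny) → ℝ)
    (hf : ContDiff ℝ 1 (fun p : EuclideanSpace ℝ (Fin nx) × EuclideanSpace ℝ (Fin ny) =>
      f p.1 p.2))
    (hinvex : ∀ y x, fderiv ℝ (fun x' => f x' y) x = 0 → ∀ x', f x y ≤ f x' y)
    (hincave : ∀ x y, fderiv ℝ (fun y' => f x y') y = 0 → ∀ y', f x y' ≤ f x y)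
    (hinc : ∀ y x, ∃ K : Set (EuclideanSpace ℝ (Fin nx)),
      IsCompact K ∧ ∀ z ∉ K, f x y < f z y)
    (hdec : ∀ x y, ∃ K : Set (EuclideanSpace ℝ (Fin ny)),
      IsCompact K ∧ ∀ z ∉ K, f x z < f x y)
    (Mlo Mhi E : Set (EuclideanSpace ℝ (Fin nx) × EuclideanSpace ℝ (Fin ny)))
    (hMlo : Mlo = {p | (∀ b, f p.1 b ≤ f p.1 p.2) ∧ ∀ a, f p.1 p.2 ≤ ⨆ y', f a y'})
    (hMhi : Mhi = {p | (∀ a, f p.1 p.2 ≤ f a p.2) ∧ ∀ b, (⨅ x', f x' b) ≤ f p.1 p.2})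
    (hE : E = {p | (∀ b, f p.1 b ≤ f p.1 p.2) ∧ ∀ a, f p.1 p.2 ≤ f a p.2})
    (hEne : E.Nonempty) :
    IsConnected (Mlo ∪ Mhi) := by
  subst hMlo hMhi hE
  obtain ⟨s, hs⟩ := hEne
  have hfx (y) : ContDiff ℝ 1 (f · y) := hf.comp (contDiff_id.prodMk contDiff_const)
  have hfy (x) : ContDiff ℝ 1 (f x) := hf.comp (contDiff_const.prodMk contDiff_id)
  exact isConnected_setOf_isMinimaxPoint_union_isMaximinPoint
    (fun y => isConnected_minSet (hfx y) (hinvex y) (hinc y))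
    (fun x => isConnected_maxSet (hfy x) (hincave x) (hdec x)) hs
end
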